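/- arXiv:2007.09376 — 4 statements merged into one kernel-verified Lean document; each statement's English description precedes it below -/
import Mathlib

section
/- Theorem 2.2 (monotonicity for r > 3). Let n ≥ 2, let r > 3 be a real number, let μ > 0 and β > 0, and set η = ((r−3)/(2μ(r−1))) · (2/(βμ(r−1)))^{2/(r−3)}. Then for all continuously differentiable, compactly supported, divergence-free vector fields u, v : ℝⁿ → ℝⁿ, writing w := u − v, one has μ ∫_{ℝⁿ} |∇w(x)|² dx + ( b(u,u,w) − b(v,v,w) ) + β ∫_{ℝⁿ} ⟨|u(x)|^{r−1} u(x) − |v(x)|^{r−1} v(x), w(x)⟩ dx + η ∫_{ℝⁿ} |w(x)|² dx ≥ (μ/2) ∫_{ℝⁿ} |∇w(x)|² dx ≥ 0. -/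
open MeasureTheory
open scoped RealInnerProductSpace

/-- The Navier–Stokes trilinear form
`b(u,v,w) = ∫ Σ_{i,j} u_i (∂v_j/∂x_i) w_j dx` on `ℝⁿ`. -/
noncomputable def bForm (n : ℕ)
    (u v w : EuclideanSpace ℝ (Fin n) → EuclideanSpace ℝ (Fin n)) : ℝ :=
  ∫ x, ∑ i, ∑ j, u x i * fderiv ℝ v x (EuclideanSpace.single i 1) j * w x j

/-- The squared Frobenius norm of the gradient, `|∇w(x)|² = Σ_{i,j} ((∂w_j/∂x_i)(x))²`. -/
noncomputable def gradSq (n : ℕ)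
    (w : EuclideanSpace ℝ (Fin n) → EuclideanSpace ℝ (Fin n))
    (x : EuclideanSpace ℝ (Fin n)) : ℝ :=
  ∑ i, ∑ j, (fderiv ℝ w x (EuclideanSpace.single i 1) j) ^ 2

/-!
With `w = u - v`, integration by parts against a divergence-free field makes `b(a, ·, ·)`
antisymmetric, so `b(u,u,w) - b(v,v,w) = b(u,w,w) + b(w,v,w) = -b(w,w,v)`. Pointwise,
`⟨(Dw) w, v⟩ ≤ (μ/2)|∇w|² + |v|²|w|²/(2μ)` by Cauchy–Schwarz, and Young's inequality with the
conjugate exponents `(r-1)/2` and `(r-1)/(r-3)` gives `|v|²/(2μ) ≤ (β/2)|v|^{r-1} + η`. Finally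
`(β/2)|v|^{r-1}|w|² ≤ β⟨|u|^{r-1}u - |v|^{r-1}v, w⟩` by monotonicity of `x ↦ |x|^{r-1}x`.
-/

noncomputable def youngConst (r μ β : ℝ) : ℝ :=
  (r - 3) / (2 * μ * (r - 1)) * (2 / (β * μ * (r - 1))) ^ ((2 : ℝ) / (r - 3))

theorem mul_le_div_two_mul_sq_add_sq_div_two_mul {μ : ℝ} (hμ : 0 < μ) (p q : ℝ) :
    p * q ≤ μ / 2 * p ^ 2 + q ^ 2 / (2 * μ) := by
  have h : 0 ≤ (μ * p - q) ^ 2 / (2 * μ) := by positivity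
  have hexpand : (μ * p - q) ^ 2 / (2 * μ) = μ / 2 * p ^ 2 + q ^ 2 / (2 * μ) - p * q := by
    field_simp
    ring
  linarith

theorem sq_div_le_rpow_add {r μ β s : ℝ} (hr : 3 < r) (hμ : 0 < μ) (hβ : 0 < β) (hs : 0 ≤ s) :
    s ^ 2 / (2 * μ) ≤ β / 2 * s ^ (r - 1) + youngConst r μ β := by
  have hr1 : 0 < r - 1 := by linarith
  have hr3 : 0 < r - 3 := by linarith
  rw [youngConst]
  set c := 2 / (β * μ * (r - 1)) with hc_def
  have hc : 0 < c := by positivity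
  have hpq : ((r - 1) / 2).HolderConjugate ((r - 1) / (r - 3)) :=
    Real.holderConjugate_iff.2 ⟨by linarith, by field_simp; ring⟩
  have young := Real.young_inequality_of_nonneg (sq_nonneg s) hc.le hpq
  have hs_pow : (s ^ 2) ^ ((r - 1) / 2) = s ^ (r - 1) := by
    rw [← Real.rpow_natCast, ← Real.rpow_mul hs]
    congr 1
    push_cast
    ring
  have hc_pow : c ^ ((r - 1) / (r - 3)) = c * c ^ ((2 : ℝ) / (r - 3)) := by
    rw [← Real.rpow_one_add' hc.le (by positivity)]
    congr 1
    field_simp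
    ring
  rw [hs_pow, hc_pow] at young
  calc s ^ 2 / (2 * μ) = β * (r - 1) / 4 * (s ^ 2 * c) := by
        rw [hc_def]; field_simp; ring
    _ ≤ β * (r - 1) / 4 * (s ^ (r - 1) / ((r - 1) / 2)
          + c * c ^ ((2 : ℝ) / (r - 3)) / ((r - 1) / (r - 3))) := by gcongr
    _ = _ := by
        rw [hc_def]; field_simp; ring

theorem rpow_norm_mul_norm_sub_sq_le_inner {E : Type*} [NormedAddCommGroup E]
    [InnerProductSpace ℝ E] {p : ℝ} (hp : 0 ≤ p) (a b : E) :
    ‖b‖ ^ p / 2 * ‖a - b‖ ^ 2 ≤ ⟪‖a‖ ^ p • a - ‖b‖ ^ p • b, a - b⟫ := by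
  have hA : 0 ≤ ‖a‖ ^ p := by positivity
  have hsplit : ⟪‖a‖ ^ p • a - ‖b‖ ^ p • b, a - b⟫
      = (‖a‖ ^ p + ‖b‖ ^ p) / 2 * ‖a - b‖ ^ 2
        + (‖a‖ ^ p - ‖b‖ ^ p) * (‖a‖ ^ 2 - ‖b‖ ^ 2) / 2 := by
    rw [norm_sub_sq_real]
    simp only [inner_sub_left, inner_sub_right, real_inner_smul_left, real_inner_self_eq_norm_sq,
      real_inner_comm a b]
    ring
  have hmono : 0 ≤ (‖a‖ ^ p - ‖b‖ ^ p) * (‖a‖ ^ 2 - ‖b‖ ^ 2) := by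
    rcases le_total ‖a‖ ‖b‖ with h | h
    · exact mul_nonneg_of_nonpos_of_nonpos
        (sub_nonpos.2 (Real.rpow_le_rpow (norm_nonneg a) h hp))
        (sub_nonpos.2 (pow_le_pow_left₀ (norm_nonneg a) h 2))
    · exact mul_nonneg (sub_nonneg.2 (Real.rpow_le_rpow (norm_nonneg b) h hp))
        (sub_nonneg.2 (pow_le_pow_left₀ (norm_nonneg b) h 2))
  rw [hsplit]
  nlinarith [mul_nonneg hA (sq_nonneg ‖a - b‖)]

section Coordinates

variable {ι : Type*} [Fintype ι]

theorem fderiv_piLp_apply {E : Type*} [NormedAddCommGroup E] [NormedSpace ℝ E]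
    {a : E → EuclideanSpace ℝ ι} {x : E} (ha : DifferentiableAt ℝ a x) (i : ι) (v : E) :
    fderiv ℝ (fun y => a y i) x v = fderiv ℝ a x v i := by
  have h : HasFDerivAt (fun y => a y i) (PiLp.proj 2 _ i ∘L fderiv ℝ a x) x :=
    (PiLp.hasFDerivAt_apply (𝕜 := ℝ) 2 (a x) i).comp x ha.hasFDerivAt
  rw [h.fderiv]
  rfl

variable [DecidableEq ι]

theorem ContinuousLinearMap.apply_eq_sum_single {F : Type*} [NormedAddCommGroup F]
    [NormedSpace ℝ F] (L : EuclideanSpace ℝ ι →L[ℝ] F) (y : EuclideanSpace ℝ ι) :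
    L y = ∑ i, y i • L (EuclideanSpace.single i 1) := by
  conv_lhs => rw [← (EuclideanSpace.basisFun ι ℝ).sum_repr y]
  simp

theorem ContinuousLinearMap.inner_apply_eq_sum
    (L : EuclideanSpace ℝ ι →L[ℝ] EuclideanSpace ℝ ι) (a c : EuclideanSpace ℝ ι) :
    ⟪L a, c⟫ = ∑ i, ∑ j, a i * L (EuclideanSpace.single i 1) j * c j := by
  rw [L.apply_eq_sum_single, sum_inner]
  refine Finset.sum_congr rfl fun i _ => ?_
  rw [real_inner_smul_left, PiLp.inner_apply, Finset.mul_sum]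
  refine Finset.sum_congr rfl fun j _ => ?_
  simp only [RCLike.inner_apply, conj_trivial]
  ring

theorem ContinuousLinearMap.opNorm_le_sqrt_sum_sq
    (L : EuclideanSpace ℝ ι →L[ℝ] EuclideanSpace ℝ ι) :
    ‖L‖ ≤ √(∑ i, ∑ j, L (EuclideanSpace.single i 1) j ^ 2) := by
  set S := ∑ i, ∑ j, L (EuclideanSpace.single i 1) j ^ 2
  have hS : 0 ≤ S := by positivity
  refine L.opNorm_le_bound (Real.sqrt_nonneg S) fun y => ?_
  have hcoord (j : ι) : L y j = ∑ i, y i * L (EuclideanSpace.single i 1) j := by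
    simp [L.apply_eq_sum_single y]
  have hsq : ‖L y‖ ^ 2 ≤ S * ‖y‖ ^ 2 :=
    calc ‖L y‖ ^ 2 = ∑ j, (∑ i, y i * L (EuclideanSpace.single i 1) j) ^ 2 := by
          simp [EuclideanSpace.norm_sq_eq, hcoord]
      _ ≤ ∑ j, (∑ i, y i ^ 2) * ∑ i, L (EuclideanSpace.single i 1) j ^ 2 :=
          Finset.sum_le_sum fun j _ => Finset.sum_mul_sq_le_sq_mul_sq _ _ _
      _ = S * ‖y‖ ^ 2 := by
          rw [← Finset.mul_sum, Finset.sum_comm, mul_comm, EuclideanSpace.norm_sq_eq]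
          simp only [Real.norm_eq_abs, sq_abs]
          rfl
  rw [← Real.sqrt_sq (norm_nonneg y), ← Real.sqrt_mul hS]
  exact Real.le_sqrt_of_sq_le hsq

end Coordinates

theorem inner_apply_sub_le {ι : Type*} [Fintype ι] [DecidableEq ι] {r μ β : ℝ} (hr : 3 < r)
    (hμ : 0 < μ) (hβ : 0 < β) (L : EuclideanSpace ℝ ι →L[ℝ] EuclideanSpace ℝ ι)
    (a b : EuclideanSpace ℝ ι) :
    ⟪L (a - b), b⟫ ≤ μ / 2 * ∑ i, ∑ j, L (EuclideanSpace.single i 1) j ^ 2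
      + (β * ⟪‖a‖ ^ (r - 1) • a - ‖b‖ ^ (r - 1) • b, a - b⟫
        + youngConst r μ β * ‖a - b‖ ^ 2) := by
  set S := ∑ i, ∑ j, L (EuclideanSpace.single i 1) j ^ 2
  set η := youngConst r μ β
  have hS : 0 ≤ S := by positivity
  have hyoung := sq_div_le_rpow_add hr hμ hβ (norm_nonneg b)
  have hmono := rpow_norm_mul_norm_sub_sq_le_inner (by linarith : 0 ≤ r - 1) a b
  calc ⟪L (a - b), b⟫ ≤ ‖L‖ * ‖a - b‖ * ‖b‖ :=
        (real_inner_le_norm _ _).trans (by gcongr; exact L.le_opNorm _)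
    _ ≤ √S * (‖a - b‖ * ‖b‖) := by
        rw [← mul_assoc]; gcongr; exact L.opNorm_le_sqrt_sum_sq
    _ ≤ μ / 2 * √S ^ 2 + (‖a - b‖ * ‖b‖) ^ 2 / (2 * μ) :=
        mul_le_div_two_mul_sq_add_sq_div_two_mul hμ _ _
    _ = μ / 2 * S + ‖b‖ ^ 2 / (2 * μ) * ‖a - b‖ ^ 2 := by
        rw [Real.sq_sqrt hS]; ring
    _ ≤ μ / 2 * S + (β / 2 * ‖b‖ ^ (r - 1) + η) * ‖a - b‖ ^ 2 := by gcongr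
    _ ≤ μ / 2 * S + (β * ⟪‖a‖ ^ (r - 1) • a - ‖b‖ ^ (r - 1) • b, a - b⟫ + η * ‖a - b‖ ^ 2) := by
        nlinarith

section IntegrationByParts

variable {ι : Type*} [Fintype ι]

theorem integrable_inner_fderiv_apply {a b c : EuclideanSpace ℝ ι → EuclideanSpace ℝ ι}
    (ha : Continuous a) (hb : ContDiff ℝ 1 b) (hc : Continuous c) (hcc : HasCompactSupport c) :
    Integrable fun x => ⟪fderiv ℝ b x (a x), c x⟫ :=
  (by fun_prop : Continuous _).integrable_of_hasCompactSupport
    (hcc.mono fun x hx h0 => hx (by simp [h0]))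

variable [DecidableEq ι]

theorem integral_fderiv_apply_eq_zero_of_divergence_eq_zero
    {a : EuclideanSpace ℝ ι → EuclideanSpace ℝ ι} {f : EuclideanSpace ℝ ι → ℝ}
    (ha : ContDiff ℝ 1 a) (hdiv : ∀ x, ∑ i, fderiv ℝ a x (EuclideanSpace.single i 1) i = 0)
    (hf : ContDiff ℝ 1 f) (hcf : HasCompactSupport f) :
    ∫ x, fderiv ℝ f x (a x) = 0 := by
  have had := ha.differentiable one_ne_zero
  have hint_left (i : ι) :
      Integrable fun x => a x i * fderiv ℝ f x (EuclideanSpace.single i 1) :=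
    (by fun_prop : Continuous _).integrable_of_hasCompactSupport
      (hcf.fderiv_apply (𝕜 := ℝ) _).mul_left
  have hint_right (i : ι) :
      Integrable fun x => fderiv ℝ a x (EuclideanSpace.single i 1) i * f x :=
    (by fun_prop : Continuous _).integrable_of_hasCompactSupport hcf.mul_left
  have hparts (i : ι) :
      ∫ x, a x i * fderiv ℝ f x (EuclideanSpace.single i 1)
        = -∫ x, fderiv ℝ a x (EuclideanSpace.single i 1) i * f x := by
    simp only [← fderiv_piLp_apply (had _)]
    refine integral_mul_fderiv_eq_neg_fderiv_mul_of_integrable ?_ (hint_left i)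
      ((by fun_prop : Continuous _).integrable_of_hasCompactSupport hcf.mul_left)
      (fun x _ => (differentiableAt_piLp 2).1 (had x) i)
      (fun x _ => hf.differentiable one_ne_zero x)
    simpa only [fderiv_piLp_apply (had _)] using hint_right i
  calc ∫ x, fderiv ℝ f x (a x)
      = ∑ i, ∫ x, a x i * fderiv ℝ f x (EuclideanSpace.single i 1) := by
        simp only [ContinuousLinearMap.apply_eq_sum_single _ (a _), smul_eq_mul]
        exact integral_finsetSum _ fun i _ => hint_left i
    _ = -∫ x, (∑ i, fderiv ℝ a x (EuclideanSpace.single i 1) i) * f x := by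
        simp only [hparts, Finset.sum_neg_distrib, Finset.sum_mul]
        rw [integral_finsetSum _ fun i _ => hint_right i]
    _ = 0 := by simp [hdiv]

end IntegrationByParts

section TrilinearForm

variable {n : ℕ}

theorem bForm_eq_integral_inner (a b c : EuclideanSpace ℝ (Fin n) → EuclideanSpace ℝ (Fin n)) :
    bForm n a b c = ∫ x, ⟪fderiv ℝ b x (a x), c x⟫ := by
  simp only [bForm, ContinuousLinearMap.inner_apply_eq_sum]

variable {a b c : EuclideanSpace ℝ (Fin n) → EuclideanSpace ℝ (Fin n)}

theorem bForm_swap (ha : ContDiff ℝ 1 a)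
    (hdiv : ∀ x, ∑ i, fderiv ℝ a x (EuclideanSpace.single i 1) i = 0)
    (hb : ContDiff ℝ 1 b) (hcb : HasCompactSupport b)
    (hc : ContDiff ℝ 1 c) (hcc : HasCompactSupport c) :
    bForm n a b c = -bForm n a c b := by
  have hbd := hb.differentiable one_ne_zero
  have hcd := hc.differentiable one_ne_zero
  have hzero := integral_fderiv_apply_eq_zero_of_divergence_eq_zero ha hdiv (hb.inner ℝ hc)
    (hcc.mono fun x hx h0 => hx (by simp [h0]))
  simp only [fderiv_inner_apply ℝ (hbd _) (hcd _)] at hzero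
  simp only [real_inner_comm _ (b _)] at hzero
  rw [integral_add (integrable_inner_fderiv_apply ha.continuous hc hb.continuous hcb)
    (integrable_inner_fderiv_apply ha.continuous hb hc.continuous hcc)] at hzero
  rw [bForm_eq_integral_inner, bForm_eq_integral_inner]
  linarith

theorem bForm_self_eq_zero (ha : ContDiff ℝ 1 a)
    (hdiv : ∀ x, ∑ i, fderiv ℝ a x (EuclideanSpace.single i 1) i = 0)
    (hb : ContDiff ℝ 1 b) (hcb : HasCompactSupport b) :
    bForm n a b b = 0 := by
  linarith [bForm_swap ha hdiv hb hcb hb hcb]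

variable {u v : EuclideanSpace ℝ (Fin n) → EuclideanSpace ℝ (Fin n)}

theorem bForm_sub_bForm_eq_neg_bForm
    (hu : ContDiff ℝ 1 u) (hcu : HasCompactSupport u)
    (hdu : ∀ x, ∑ i, fderiv ℝ u x (EuclideanSpace.single i 1) i = 0)
    (hv : ContDiff ℝ 1 v) (hcv : HasCompactSupport v)
    (hdv : ∀ x, ∑ i, fderiv ℝ v x (EuclideanSpace.single i 1) i = 0) :
    bForm n u u (u - v) - bForm n v v (u - v) = -bForm n (u - v) (u - v) v := by
  set w := u - v with hw_def
  have hw : ContDiff ℝ 1 w := hu.sub hv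
  have hcw : HasCompactSupport w := hcu.sub hcv
  have hDw (x) : fderiv ℝ w x = fderiv ℝ u x - fderiv ℝ v x :=
    fderiv_sub (hu.differentiable one_ne_zero x) (hv.differentiable one_ne_zero x)
  have hdw (x) : ∑ i, fderiv ℝ w x (EuclideanSpace.single i 1) i = 0 := by
    simp [hDw, Finset.sum_sub_distrib, hdu x, hdv x]
  -- `Du(u) - Dv(v) = Dw(u) + Dv(w)`
  have hsplit : bForm n u u w - bForm n v v w = bForm n u w w + bForm n w v w := by
    simp only [bForm_eq_integral_inner]
    rw [← integral_sub (integrable_inner_fderiv_apply hu.continuous hu hw.continuous hcw)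
        (integrable_inner_fderiv_apply hv.continuous hv hw.continuous hcw),
      ← integral_add (integrable_inner_fderiv_apply hu.continuous hw hw.continuous hcw)
        (integrable_inner_fderiv_apply hw.continuous hv hw.continuous hcw)]
    congr 1
    funext x
    rw [hDw x]
    simp only [hw_def, sub_apply, Pi.sub_apply, map_sub, inner_sub_left]
    ring
  rw [hsplit, bForm_self_eq_zero hu hdu hw hcw, bForm_swap hw hdw hv hcv hw hcw, zero_add]

end TrilinearForm

theorem integrable_gradSq {n : ℕ} {w : EuclideanSpace ℝ (Fin n) → EuclideanSpace ℝ (Fin n)}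
    (hw : ContDiff ℝ 1 w) (hcw : HasCompactSupport w) : Integrable (gradSq n w) :=
  (by unfold gradSq; fun_prop : Continuous _).integrable_of_hasCompactSupport
    ((hcw.fderiv (𝕜 := ℝ)).mono fun x hx h0 => hx (by simp [gradSq, h0]))

theorem integral_inner_fderiv_sub_apply_le {n : ℕ} {r μ β : ℝ} (hr : 3 < r) (hμ : 0 < μ)
    (hβ : 0 < β) {u v : EuclideanSpace ℝ (Fin n) → EuclideanSpace ℝ (Fin n)}
    (hu : ContDiff ℝ 1 u) (hcu : HasCompactSupport u)
    (hv : ContDiff ℝ 1 v) (hcv : HasCompactSupport v) :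
    ∫ x, ⟪fderiv ℝ (u - v) x ((u - v) x), v x⟫
      ≤ μ / 2 * (∫ x, gradSq n (u - v) x)
        + (β * (∫ x, ⟪‖u x‖ ^ (r - 1) • u x - ‖v x‖ ^ (r - 1) • v x, u x - v x⟫)
          + youngConst r μ β * ∫ x, ‖u x - v x‖ ^ 2) := by
  have hw : ContDiff ℝ 1 (u - v) := hu.sub hv
  have hcw : HasCompactSupport (u - v) := hcu.sub hcv
  have hr1 : 0 ≤ r - 1 := by linarith
  have hgrad_int := (integrable_gradSq hw hcw).const_mul (μ / 2)
  have hmono_int : Integrable fun x =>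
      β * ⟪‖u x‖ ^ (r - 1) • u x - ‖v x‖ ^ (r - 1) • v x, u x - v x⟫ :=
    (by fun_prop (disch := exact hr1) : Continuous _).integrable_of_hasCompactSupport
      (hcw.mono fun x hx h0 => hx (by simp [sub_eq_zero.1 h0]))
  have hsq_int : Integrable fun x => youngConst r μ β * ‖u x - v x‖ ^ 2 :=
    (by fun_prop : Continuous _).integrable_of_hasCompactSupport
      (hcw.mono fun x hx h0 => hx (by simp [sub_eq_zero.1 h0]))
  calc _ ≤ ∫ x, (μ / 2 * gradSq n (u - v) x
          + (β * ⟪‖u x‖ ^ (r - 1) • u x - ‖v x‖ ^ (r - 1) • v x, u x - v x⟫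
            + youngConst r μ β * ‖u x - v x‖ ^ 2)) :=
        integral_mono (integrable_inner_fderiv_apply hw.continuous hw hv.continuous hcv)
          (hgrad_int.add (hmono_int.add hsq_int))
          fun x => inner_apply_sub_le hr hμ hβ _ _ _
    _ = _ := by
        rw [integral_add hgrad_int, integral_add hmono_int hsq_int,
          integral_const_mul, integral_const_mul, integral_const_mul]
        exact hmono_int.add hsq_int

theorem monotonicity_r_gt_three_general (n : ℕ) (r μ β η : ℝ)
    (hr : 3 < r) (hμ : 0 < μ) (hβ : 0 < β)
    (hη : η = (r - 3) / (2 * μ * (r - 1)) * (2 / (β * μ * (r - 1))) ^ ((2 : ℝ) / (r - 3)))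
    (u v : EuclideanSpace ℝ (Fin n) → EuclideanSpace ℝ (Fin n))
    (hu : ContDiff ℝ 1 u) (hcu : HasCompactSupport u)
    (hdu : ∀ x, ∑ i, fderiv ℝ u x (EuclideanSpace.single i 1) i = 0)
    (hv : ContDiff ℝ 1 v) (hcv : HasCompactSupport v)
    (hdv : ∀ x, ∑ i, fderiv ℝ v x (EuclideanSpace.single i 1) i = 0) :
    (μ / 2) * (∫ x, gradSq n (u - v) x) ≤
      μ * (∫ x, gradSq n (u - v) x)
        + (bForm n u u (u - v) - bForm n v v (u - v))
        + β * (∫ x, ⟪(‖u x‖ ^ (r - 1)) • u x - (‖v x‖ ^ (r - 1)) • v x, u x - v x⟫)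
        + η * (∫ x, ‖u x - v x‖ ^ 2)
    ∧ 0 ≤ (μ / 2) * (∫ x, gradSq n (u - v) x) := by
  have hconv := integral_inner_fderiv_sub_apply_le hr hμ hβ hu hcu hv hcv
  have hgrad : 0 ≤ ∫ x, gradSq n (u - v) x :=
    integral_nonneg fun x => by unfold gradSq; positivity
  rw [show η = youngConst r μ β from hη,
    bForm_sub_bForm_eq_neg_bForm hu hcu hdu hv hcv hdv, bForm_eq_integral_inner]
  exact ⟨by linarith, by positivity⟩

/-- Theorem 2.2: monotonicity of the convective Brinkman–Forchheimer operator for `r > 3`. -/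
theorem monotonicity_r_gt_three (n : ℕ) (hn : 2 ≤ n) (r μ β η : ℝ)
    (hr : 3 < r) (hμ : 0 < μ) (hβ : 0 < β)
    (hη : η = (r - 3) / (2 * μ * (r - 1)) * (2 / (β * μ * (r - 1))) ^ ((2 : ℝ) / (r - 3)))
    (u v : EuclideanSpace ℝ (Fin n) → EuclideanSpace ℝ (Fin n))
    (hu : ContDiff ℝ 1 u) (hcu : HasCompactSupport u)
    (hdu : ∀ x, ∑ i, fderiv ℝ u x (EuclideanSpace.single i 1) i = 0)
    (hv : ContDiff ℝ 1 v) (hcv : HasCompactSupport v)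
    (hdv : ∀ x, ∑ i, fderiv ℝ v x (EuclideanSpace.single i 1) i = 0) :
    (μ / 2) * (∫ x, gradSq n (u - v) x) ≤
      μ * (∫ x, gradSq n (u - v) x)
        + (bForm n u u (u - v) - bForm n v v (u - v))
        + β * (∫ x, ⟪(‖u x‖ ^ (r - 1)) • u x - (‖v x‖ ^ (r - 1)) • v x, u x - v x⟫)
        + η * (∫ x, ‖u x - v x‖ ^ 2)
    ∧ 0 ≤ (μ / 2) * (∫ x, gradSq n (u - v) x) :=
  monotonicity_r_gt_three_general n r μ β η hr hμ hβ hη u v hu hcu hdu hv hcv hdv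
end

section
/- Strengthened pointwise monotonicity of the Forchheimer nonlinearity (pointwise form of inequality (2.23) of the paper). Let E be a real inner product space and r ≥ 1 a real number. Then for all a, b ∈ E, ⟨ ‖a‖^{r−1} a − ‖b‖^{r−1} b , a − b ⟩ ≥ (1/2) ‖a‖^{r−1} ‖a − b‖² + (1/2) ‖b‖^{r−1} ‖a − b‖² ≥ 0. -/
/-!
Expanding the inner product gives, for any scalars `α, β`,
`⟪α a - β b, a - b⟫ = (α + β)/2 ‖a - b‖² + (α - β)(‖a‖² - ‖b‖²)/2`.
With `α = φ ‖a‖`, `β = φ ‖b‖` for a nondecreasing `φ`, the last term is nonnegative because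
`φ` and `t ↦ t²` are both nondecreasing on `[0, ∞)`; for the Forchheimer term `φ t = t ^ (r - 1)`.
-/

open scoped RealInnerProductSpace
open Set

section

variable {E : Type*} [NormedAddCommGroup E] [InnerProductSpace ℝ E]

theorem inner_smul_sub_smul_sub_eq (α β : ℝ) (a b : E) :
    ⟪α • a - β • b, a - b⟫ =
      (α + β) / 2 * ‖a - b‖ ^ 2 + (α - β) * (‖a‖ ^ 2 - ‖b‖ ^ 2) / 2 := by
  rw [norm_sub_sq_real]
  simp only [inner_sub_left, inner_sub_right, real_inner_smul_left, real_inner_self_eq_norm_sq,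
    real_inner_comm a b]
  ring

theorem MonotoneOn.add_div_two_mul_norm_sub_sq_le_inner {φ : ℝ → ℝ}
    (hφ : MonotoneOn φ (Ici 0)) (a b : E) :
    (φ ‖a‖ + φ ‖b‖) / 2 * ‖a - b‖ ^ 2 ≤ ⟪φ ‖a‖ • a - φ ‖b‖ • b, a - b⟫ := by
  have hmono : 0 ≤ (φ ‖a‖ - φ ‖b‖) * (‖a‖ ^ 2 - ‖b‖ ^ 2) :=
    (hφ.monovaryOn (pow_left_monotoneOn (n := 2))).sub_mul_sub_nonneg
      (norm_nonneg b) (norm_nonneg a)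
  rw [inner_smul_sub_smul_sub_eq]
  linarith

end

/-- Strengthened pointwise monotonicity of the Forchheimer nonlinearity
(pointwise form of inequality (2.23)): for `r ≥ 1` and `a, b` in a real inner product space,
`⟨‖a‖^{r−1} a − ‖b‖^{r−1} b, a − b⟩ ≥ (1/2)‖a‖^{r−1}‖a−b‖² + (1/2)‖b‖^{r−1}‖a−b‖² ≥ 0`. -/
theorem forchheimer_pointwise_strong_monotone
    {E : Type*} [NormedAddCommGroup E] [InnerProductSpace ℝ E]
    (r : ℝ) (hr : 1 ≤ r) (a b : E) :
    (1 / 2) * ‖a‖ ^ (r - 1) * ‖a - b‖ ^ 2 + (1 / 2) * ‖b‖ ^ (r - 1) * ‖a - b‖ ^ 2 ≤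
      ⟪(‖a‖ ^ (r - 1)) • a - (‖b‖ ^ (r - 1)) • b, a - b⟫
    ∧ 0 ≤ (1 / 2) * ‖a‖ ^ (r - 1) * ‖a - b‖ ^ 2 + (1 / 2) * ‖b‖ ^ (r - 1) * ‖a - b‖ ^ 2 := by
  have hrpow : MonotoneOn (fun t : ℝ ↦ t ^ (r - 1)) (Ici 0) :=
    Real.monotoneOn_rpow_Ici_of_exponent_nonneg (by linarith)
  refine ⟨?_, by positivity⟩
  calc (1 / 2) * ‖a‖ ^ (r - 1) * ‖a - b‖ ^ 2 + (1 / 2) * ‖b‖ ^ (r - 1) * ‖a - b‖ ^ 2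
      = (‖a‖ ^ (r - 1) + ‖b‖ ^ (r - 1)) / 2 * ‖a - b‖ ^ 2 := by ring
    _ ≤ _ := hrpow.add_div_two_mul_norm_sub_sq_le_inner a b
end

section
/- Local Lipschitz estimate for the Forchheimer nonlinearity from L^{r+1} to L^{(r+1)/r} (inequality (2.13)/(213) of the paper). Let (X, 𝔪) be a measure space, E a real inner product space, and r ≥ 1 a real number. If u, v ∈ L^{r+1}(𝔪; E), then the function Φ(x) = ‖u(x)‖^{r−1} u(x) − ‖v(x)‖^{r−1} v(x) belongs to L^{(r+1)/r}(𝔪; E) and ‖Φ‖_{L^{(r+1)/r}} ≤ r ( ‖u‖_{L^{r+1}} + ‖v‖_{L^{r+1}} )^{r−1} ‖u − v‖_{L^{r+1}}. -/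
/-! Splitting `‖a‖^q a - ‖b‖^q b = ‖a‖^q (a - b) + (‖a‖^q - ‖b‖^q) b` for `‖b‖ ≤ ‖a‖` and using
`(s^q - t^q) t ≤ q s^q (s - t)` gives the pointwise bound `(q + 1) (‖a‖ + ‖b‖)^q ‖a - b‖`.
Hölder's inequality with exponents `(r+1)/(r-1)` and `r+1`, followed by Minkowski's inequality for
`‖u‖ + ‖v‖`, turns it into the `L^{(r+1)/r}` estimate. -/

open MeasureTheory
open scoped ENNReal

open Real in
theorem rpow_sub_rpow_mul_le {q s t : ℝ} (hq : 0 ≤ q) (ht : 0 ≤ t) (hts : t ≤ s) :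
    (s ^ q - t ^ q) * t ≤ q * s ^ q * (s - t) := by
  obtain rfl | ht := ht.eq_or_lt
  · simpa using mul_nonneg (mul_nonneg hq (rpow_nonneg hts q)) hts
  have hs : 0 < s := ht.trans_le hts
  -- `(t / s) ^ q = exp (-q log (s / t)) ≥ 1 - q log (s / t)` and `log (s / t) ≤ s / t - 1`
  have hlog : log (s / t) * t ≤ s - t := by
    calc log (s / t) * t ≤ (s / t - 1) * t := by gcongr; exact log_le_sub_one_of_pos (by positivity)
      _ = s - t := by field_simp
  have hexp : s ^ q - t ^ q ≤ s ^ q * (q * log (s / t)) := by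
    have ht_eq : t ^ q = s ^ q * exp (-(q * log (s / t))) := by
      rw [rpow_def_of_pos ht, rpow_def_of_pos hs, ← exp_add, log_div hs.ne' ht.ne']
      ring_nf
    have := add_one_le_exp (-(q * log (s / t)))
    rw [ht_eq]
    nlinarith [rpow_nonneg hs.le q]
  calc (s ^ q - t ^ q) * t ≤ s ^ q * q * (log (s / t) * t) := by
        nlinarith [mul_le_mul_of_nonneg_right hexp ht.le]
    _ ≤ s ^ q * q * (s - t) := by gcongr
    _ = q * s ^ q * (s - t) := by ring

theorem norm_rpow_smul_sub_rpow_smul_le {E : Type*} [SeminormedAddCommGroup E] [NormedSpace ℝ E]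
    {q : ℝ} (hq : 0 ≤ q) (a b : E) :
    ‖‖a‖ ^ q • a - ‖b‖ ^ q • b‖ ≤ (q + 1) * (‖a‖ + ‖b‖) ^ q * ‖a - b‖ := by
  wlog hba : ‖b‖ ≤ ‖a‖ generalizing a b
  · simpa only [norm_sub_rev, add_comm ‖b‖] using this b a (le_of_not_ge hba)
  have hmono : ‖b‖ ^ q ≤ ‖a‖ ^ q := by gcongr
  calc ‖‖a‖ ^ q • a - ‖b‖ ^ q • b‖
      = ‖‖a‖ ^ q • (a - b) + (‖a‖ ^ q - ‖b‖ ^ q) • b‖ := by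
        rw [smul_sub, sub_smul, sub_add_sub_cancel]
    _ ≤ ‖a‖ ^ q * ‖a - b‖ + (‖a‖ ^ q - ‖b‖ ^ q) * ‖b‖ := by
        refine (norm_add_le _ _).trans_eq ?_
        rw [norm_smul, norm_smul, Real.norm_of_nonneg (by positivity),
          Real.norm_of_nonneg (sub_nonneg.mpr hmono)]
    _ ≤ ‖a‖ ^ q * ‖a - b‖ + q * ‖a‖ ^ q * ‖a - b‖ := by
        have : q * ‖a‖ ^ q * (‖a‖ - ‖b‖) ≤ q * ‖a‖ ^ q * ‖a - b‖ := by
          gcongr; exact norm_sub_norm_le a b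
        linarith [rpow_sub_rpow_mul_le hq (norm_nonneg b) hba]
    _ = (q + 1) * ‖a‖ ^ q * ‖a - b‖ := by ring
    _ ≤ (q + 1) * (‖a‖ + ‖b‖) ^ q * ‖a - b‖ := by
        gcongr
        exact le_add_of_nonneg_right (norm_nonneg b)

namespace MeasureTheory

variable {α : Type*} [MeasurableSpace α] {μ : Measure α}

theorem eLpNorm_norm_rpow_smul_le {F E : Type*} [NormedAddCommGroup F] [NormedAddCommGroup E]
    [NormedSpace ℝ E] {f : α → F} {g : α → E} (hf : AEStronglyMeasurable f μ)
    (hg : AEStronglyMeasurable g μ) {q s : ℝ} (hq : 0 ≤ q) (hs : 0 < s) :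
    eLpNorm (fun x => ‖f x‖ ^ q • g x) (ENNReal.ofReal (s / (q + 1))) μ ≤
      eLpNorm f (ENNReal.ofReal s) μ ^ q * eLpNorm g (ENNReal.ofReal s) μ := by
  obtain rfl | hq := hq.eq_or_lt
  · simp
  have : ENNReal.HolderTriple (ENNReal.ofReal (s / q)) (ENNReal.ofReal s)
      (ENNReal.ofReal (s / (q + 1))) := by
    constructor
    rw [← ENNReal.ofReal_inv_of_pos (by positivity), ← ENNReal.ofReal_inv_of_pos hs,
      ← ENNReal.ofReal_inv_of_pos (by positivity), ← ENNReal.ofReal_add (by positivity)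
      (by positivity)]
    congr 1
    field_simp
  calc eLpNorm (fun x => ‖f x‖ ^ q • g x) (ENNReal.ofReal (s / (q + 1))) μ
      ≤ eLpNorm (fun x => ‖f x‖ ^ q) (ENNReal.ofReal (s / q)) μ * eLpNorm g (ENNReal.ofReal s) μ :=
        eLpNorm_smul_le_mul_eLpNorm hg (hf.norm.aemeasurable.pow_const q).aestronglyMeasurable
    _ = eLpNorm f (ENNReal.ofReal s) μ ^ q * eLpNorm g (ENNReal.ofReal s) μ := by
        rw [eLpNorm_norm_rpow f hq, ← ENNReal.ofReal_mul (by positivity), div_mul_cancel₀ s hq.ne']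

theorem eLpNorm_rpow_smul_sub_rpow_smul_le {E : Type*} [NormedAddCommGroup E] [NormedSpace ℝ E]
    {u v : α → E} (hu : AEStronglyMeasurable u μ) (hv : AEStronglyMeasurable v μ)
    {q s : ℝ} (hq : 0 ≤ q) (hs : 1 ≤ s) :
    eLpNorm (fun x => ‖u x‖ ^ q • u x - ‖v x‖ ^ q • v x) (ENNReal.ofReal (s / (q + 1))) μ ≤
      ENNReal.ofReal (q + 1) * (eLpNorm u (ENNReal.ofReal s) μ + eLpNorm v (ENNReal.ofReal s) μ) ^ q
        * eLpNorm (u - v) (ENNReal.ofReal s) μ := by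
  let w : α → ℝ := fun x => ‖u x‖ + ‖v x‖
  have hw : eLpNorm w (ENNReal.ofReal s) μ ≤
      eLpNorm u (ENNReal.ofReal s) μ + eLpNorm v (ENNReal.ofReal s) μ :=
    (eLpNorm_add_le hu.norm hv.norm (ENNReal.one_le_ofReal.mpr hs)).trans_eq
      (by rw [eLpNorm_norm, eLpNorm_norm])
  calc eLpNorm (fun x => ‖u x‖ ^ q • u x - ‖v x‖ ^ q • v x) (ENNReal.ofReal (s / (q + 1))) μ
      ≤ eLpNorm ((q + 1) • fun x => ‖w x‖ ^ q • (u - v) x) (ENNReal.ofReal (s / (q + 1))) μ := by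
        refine eLpNorm_mono fun x => ?_
        simp only [Pi.smul_apply, Pi.sub_apply, norm_smul, Real.norm_eq_abs, w,
          abs_of_nonneg (by positivity : 0 ≤ ‖u x‖ + ‖v x‖),
          abs_of_nonneg (by positivity : 0 ≤ q + 1),
          abs_of_nonneg (by positivity : 0 ≤ (‖u x‖ + ‖v x‖) ^ q), ← mul_assoc]
        exact norm_rpow_smul_sub_rpow_smul_le hq (u x) (v x)
    _ = ENNReal.ofReal (q + 1) *
          eLpNorm (fun x => ‖w x‖ ^ q • (u - v) x) (ENNReal.ofReal (s / (q + 1))) μ := by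
        rw [eLpNorm_const_smul, Real.enorm_eq_ofReal (by positivity)]
    _ ≤ ENNReal.ofReal (q + 1) *
          (eLpNorm w (ENNReal.ofReal s) μ ^ q * eLpNorm (u - v) (ENNReal.ofReal s) μ) := by
        gcongr
        exact eLpNorm_norm_rpow_smul_le (hu.norm.add hv.norm) (hu.sub hv) hq (by linarith)
    _ ≤ _ := by
        rw [← mul_assoc]
        gcongr

theorem MemLp.toReal_eLpNorm_ofReal {E : Type*} [NormedAddCommGroup E] {f : α → E} {e : ℝ}
    (he : 0 < e) (hf : MemLp f (ENNReal.ofReal e) μ) :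
    (eLpNorm f (ENNReal.ofReal e) μ).toReal = (∫ x, ‖f x‖ ^ e ∂μ) ^ e⁻¹ := by
  rw [hf.eLpNorm_eq_integral_rpow_norm (by simpa using he) ENNReal.ofReal_ne_top,
    ENNReal.toReal_ofReal he.le,
    ENNReal.toReal_ofReal (Real.rpow_nonneg (integral_nonneg fun x => by positivity) _)]

end MeasureTheory

/-- Local Lipschitz estimate for the Forchheimer nonlinearity from `L^{r+1}` to `L^{(r+1)/r}`
(inequality (2.13)): for `r ≥ 1` and `u, v ∈ L^{r+1}(𝔪; E)`, the function
`Φ(x) = ‖u x‖^{r−1} u x − ‖v x‖^{r−1} v x` belongs to `L^{(r+1)/r}(𝔪; E)` and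
`‖Φ‖_{L^{(r+1)/r}} ≤ r (‖u‖_{L^{r+1}} + ‖v‖_{L^{r+1}})^{r−1} ‖u − v‖_{L^{r+1}}`. -/
theorem forchheimer_local_lipschitz
    {X : Type*} [MeasurableSpace X] (m : Measure X)
    {E : Type*} [NormedAddCommGroup E] [InnerProductSpace ℝ E]
    (r : ℝ) (hr : 1 ≤ r) (u v : X → E)
    (hu : MemLp u (ENNReal.ofReal (r + 1)) m)
    (hv : MemLp v (ENNReal.ofReal (r + 1)) m) :
    MemLp (fun x => (‖u x‖ ^ (r - 1)) • u x - (‖v x‖ ^ (r - 1)) • v x)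
      (ENNReal.ofReal ((r + 1) / r)) m
    ∧ (∫ x, ‖(‖u x‖ ^ (r - 1)) • u x - (‖v x‖ ^ (r - 1)) • v x‖ ^ ((r + 1) / r) ∂m)
        ^ (r / (r + 1)) ≤
      r * ((∫ x, ‖u x‖ ^ (r + 1) ∂m) ^ (1 / (r + 1))
            + (∫ x, ‖v x‖ ^ (r + 1) ∂m) ^ (1 / (r + 1))) ^ (r - 1)
        * (∫ x, ‖u x - v x‖ ^ (r + 1) ∂m) ^ (1 / (r + 1)) := by
  have hq : 0 ≤ r - 1 := sub_nonneg.mpr hr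
  have hbound := eLpNorm_rpow_smul_sub_rpow_smul_le hu.1 hv.1 hq (s := r + 1) (by linarith)
  rw [sub_add_cancel] at hbound
  have hcont : Continuous fun a : E => ‖a‖ ^ (r - 1) • a :=
    (continuous_norm.rpow_const fun _ => Or.inr hq).smul continuous_id
  have hmem : MemLp (fun x => (‖u x‖ ^ (r - 1)) • u x - (‖v x‖ ^ (r - 1)) • v x)
      (ENNReal.ofReal ((r + 1) / r)) m :=
    ⟨(hcont.comp_aestronglyMeasurable hu.1).sub (hcont.comp_aestronglyMeasurable hv.1),
      hbound.trans_lt (by finiteness [hu.2, hv.2, (hu.sub hv).2])⟩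
  have huv := (hu.sub hv).toReal_eLpNorm_ofReal (by linarith)
  simp only [Pi.sub_apply] at huv
  refine ⟨hmem, ?_⟩
  rw [← inv_div (r + 1) r, one_div, ← hmem.toReal_eLpNorm_ofReal (by positivity),
    ← hu.toReal_eLpNorm_ofReal (by linarith), ← hv.toReal_eLpNorm_ofReal (by linarith), ← huv]
  calc _ ≤ _ := ENNReal.toReal_mono (by finiteness [hu.2, hv.2, (hu.sub hv).2]) hbound
    _ = _ := by
      rw [ENNReal.toReal_mul, ENNReal.toReal_mul, ENNReal.toReal_ofReal (by linarith),
        ← ENNReal.toReal_rpow, ENNReal.toReal_add hu.eLpNorm_ne_top hv.eLpNorm_ne_top]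
end

section
/- Key convection estimate (2.30) of the paper. Let n ≥ 2, let r > 3 be real, let μ > 0 and β > 0, and set η = ((r−3)/(2μ(r−1))) · (2/(βμ(r−1)))^{2/(r−3)}. Let w : ℝⁿ → ℝⁿ be continuously differentiable with ∫ |w|² dx < ∞ and ∫ |∇w|² dx < ∞, and let v : ℝⁿ → ℝⁿ be measurable with ∫ |v(x)|^{r−1} |w(x)|² dx < ∞. Then the integrand Σ_{i,j} w_i (∂w_j/∂x_i) v_j is integrable and | ∫_{ℝⁿ} Σ_{i,j=1}^n w_i(x) (∂w_j/∂x_i)(x) v_j(x) dx | ≤ (μ/2) ∫_{ℝⁿ} |∇w(x)|² dx + (β/2) ∫_{ℝⁿ} |v(x)|^{r−1} |w(x)|² dx + η ∫_{ℝⁿ} |w(x)|² dx. -/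
/-!
Cauchy–Schwarz bounds the integrand pointwise by `|∇w| · |w| |v|`, and Young's inequality splits
this into `(μ/2)|∇w|² + |w|²|v|²/(2μ)`. Since `r - 1 > 2`, weighted AM–GM absorbs `|v|²` into
`βμ|v|^{r-1}` up to an additive constant, and that constant is `2μη`. Integrating the pointwise
bound gives both the integrability and the estimate.
-/

open MeasureTheory
open scoped ENNReal

theorem Real.rpow_le_mul_rpow_add {p q c t : ℝ} (hq : 0 < q) (hqp : q < p) (hc : 0 < c)
    (ht : 0 ≤ t) :
    t ^ q ≤ c * t ^ p + (p - q) / p * (q / (c * p)) ^ (q / (p - q)) := by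
  have hp : 0 < p := hq.trans hqp
  have hpq : 0 < p - q := by linarith
  set K := c * p / q with hK
  have hK0 : 0 < K := by positivity
  have hKinv : q / (c * p) = K⁻¹ := by rw [hK, inv_div]
  have amgm := Real.geom_mean_le_arith_mean2_weighted (w₁ := q / p) (w₂ := (p - q) / p)
    (p₁ := K * t ^ p) (p₂ := K⁻¹ ^ (q / (p - q))) (by positivity) (by positivity)
    (by positivity) (by positivity) (by field_simp; ring)
  have hgeom : (K * t ^ p) ^ (q / p) * (K⁻¹ ^ (q / (p - q))) ^ ((p - q) / p) = t ^ q := by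
    rw [Real.mul_rpow hK0.le (by positivity), ← Real.rpow_mul ht,
      ← Real.rpow_mul (inv_nonneg.2 hK0.le), Real.inv_rpow hK0.le,
      mul_div_cancel₀ _ hp.ne', div_mul_div_cancel₀ hpq.ne', ← Real.rpow_neg hK0.le,
      mul_right_comm, ← Real.rpow_add hK0, add_neg_cancel, Real.rpow_zero, one_mul]
  have harith : q / p * (K * t ^ p) = c * t ^ p := by rw [hK]; field_simp
  rwa [hgeom, harith, ← hKinv] at amgm

theorem abs_sum_sum_mul_mul_le {ι : Type*} [Fintype ι] (u v : EuclideanSpace ℝ ι)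
    (A : ι → ι → ℝ) :
    |∑ i, ∑ j, u i * A i j * v j| ≤ √(∑ i, ∑ j, A i j ^ 2) * (‖u‖ * ‖v‖) := by
  have hsq : ∑ i, ∑ j, (u i * v j) ^ 2 = (‖u‖ * ‖v‖) ^ 2 := by
    simp_rw [mul_pow, EuclideanSpace.real_norm_sq_eq, Finset.sum_mul_sum]
  calc |∑ i, ∑ j, u i * A i j * v j|
      = |∑ x : ι × ι, A x.1 x.2 * (u x.1 * v x.2)| := by
        simp only [← Finset.univ_product_univ, Finset.sum_product, mul_left_comm, mul_assoc]
    _ ≤ ∑ x : ι × ι, |A x.1 x.2| * |u x.1 * v x.2| := by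
        simpa only [abs_mul] using
          Finset.abs_sum_le_sum_abs (fun x : ι × ι => A x.1 x.2 * (u x.1 * v x.2)) _
    _ ≤ √(∑ x : ι × ι, |A x.1 x.2| ^ 2) * √(∑ x : ι × ι, |u x.1 * v x.2| ^ 2) :=
        Real.sum_mul_le_sqrt_mul_sqrt _ _ _
    _ = √(∑ i, ∑ j, A i j ^ 2) * (‖u‖ * ‖v‖) := by
        simp only [sq_abs, ← Finset.univ_product_univ, Finset.sum_product, hsq]
        rw [Real.sqrt_sq (by positivity)]

theorem sq_le_mul_rpow_sub_one_add {r μ β t : ℝ} (hr : 3 < r) (hμ : 0 < μ) (hβ : 0 < β)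
    (ht : 0 ≤ t) :
    t ^ 2 ≤ β * μ * t ^ (r - 1)
      + (r - 3) / (r - 1) * (2 / (β * μ * (r - 1))) ^ ((2 : ℝ) / (r - 3)) := by
  have h := Real.rpow_le_mul_rpow_add (p := r - 1) (c := β * μ) two_pos (by linarith)
    (by positivity) ht
  rwa [Real.rpow_two, show r - 1 - 2 = r - 3 by ring] at h

theorem abs_convection_le {ι : Type*} [Fintype ι] {r μ β η : ℝ} (hr : 3 < r) (hμ : 0 < μ)
    (hβ : 0 < β)
    (hη : η = (r - 3) / (2 * μ * (r - 1)) * (2 / (β * μ * (r - 1))) ^ ((2 : ℝ) / (r - 3)))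
    (u v : EuclideanSpace ℝ ι) (A : ι → ι → ℝ) :
    |∑ i, ∑ j, u i * A i j * v j| ≤
      μ / 2 * ∑ i, ∑ j, A i j ^ 2 + β / 2 * (‖v‖ ^ (r - 1) * ‖u‖ ^ 2) + η * ‖u‖ ^ 2 := by
  set G := ∑ i, ∑ j, A i j ^ 2
  have hG : √G ^ 2 = G := Real.sq_sqrt (by positivity)
  have hyoung : √G * (‖u‖ * ‖v‖) ≤ μ / 2 * G + (‖u‖ * ‖v‖) ^ 2 / (2 * μ) := by
    have key : (μ * √G - ‖u‖ * ‖v‖) ^ 2 / (2 * μ)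
        = μ / 2 * √G ^ 2 + (‖u‖ * ‖v‖) ^ 2 / (2 * μ) - √G * (‖u‖ * ‖v‖) := by field_simp; ring
    rw [hG] at key
    linarith [show 0 ≤ (μ * √G - ‖u‖ * ‖v‖) ^ 2 / (2 * μ) by positivity]
  have habsorb :
      (‖u‖ * ‖v‖) ^ 2 / (2 * μ) ≤ β / 2 * (‖v‖ ^ (r - 1) * ‖u‖ ^ 2) + η * ‖u‖ ^ 2 := by
    have h := mul_le_mul_of_nonneg_left
      (sq_le_mul_rpow_sub_one_add hr hμ hβ (norm_nonneg v)) (sq_nonneg ‖u‖)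
    have hη' :
        η = (r - 3) / (r - 1) * (2 / (β * μ * (r - 1))) ^ ((2 : ℝ) / (r - 3)) / (2 * μ) := by
      rw [hη]; field_simp
    rw [hη', div_le_iff₀ (by positivity)]
    convert h using 1 <;> field_simp
  linarith [abs_sum_sum_mul_mul_le u v A]

theorem aestronglyMeasurable_convection {n : ℕ} {μ : Measure (EuclideanSpace ℝ (Fin n))}
    {w v : EuclideanSpace ℝ (Fin n) → EuclideanSpace ℝ (Fin n)} (hw : Measurable w)
    (hv : AEStronglyMeasurable v μ) :
    AEStronglyMeasurable
      (fun x => ∑ i, ∑ j, w x i * fderiv ℝ w x (EuclideanSpace.single i 1) j * v x j) μ := by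
  refine Finset.aestronglyMeasurable_fun_sum _ fun i _ =>
    Finset.aestronglyMeasurable_fun_sum _ fun j _ => ?_
  have hwi := (EuclideanSpace.proj i).continuous.measurable.comp hw
  have hdw := (EuclideanSpace.proj j).continuous.measurable.comp
    (measurable_fderiv_apply_const ℝ w (EuclideanSpace.single i 1))
  exact (hwi.aestronglyMeasurable.mul hdw.aestronglyMeasurable).mul
    ((EuclideanSpace.proj j).continuous.comp_aestronglyMeasurable hv)

theorem key_convection_estimate_general (n : ℕ) (r μ β η : ℝ)
    (hr : 3 < r) (hμ : 0 < μ) (hβ : 0 < β)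
    (hη : η = (r - 3) / (2 * μ * (r - 1)) * (2 / (β * μ * (r - 1))) ^ ((2 : ℝ) / (r - 3)))
    (w v : EuclideanSpace ℝ (Fin n) → EuclideanSpace ℝ (Fin n))
    (hw : ContDiff ℝ 1 w)
    (hw2 : Integrable (fun x => ‖w x‖ ^ 2))
    (hgw : Integrable (fun x => gradSq n w x))
    (hv : AEStronglyMeasurable v volume)
    (hvw : Integrable (fun x => ‖v x‖ ^ (r - 1) * ‖w x‖ ^ 2)) :
    Integrable (fun x => ∑ i, ∑ j, w x i * fderiv ℝ w x (EuclideanSpace.single i 1) j * v x j)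
    ∧ |∫ x, ∑ i, ∑ j, w x i * fderiv ℝ w x (EuclideanSpace.single i 1) j * v x j| ≤
        μ / 2 * (∫ x, gradSq n w x)
          + β / 2 * (∫ x, ‖v x‖ ^ (r - 1) * ‖w x‖ ^ 2)
          + η * (∫ x, ‖w x‖ ^ 2) := by
  have hbound : ∀ x, ‖∑ i, ∑ j, w x i * fderiv ℝ w x (EuclideanSpace.single i 1) j * v x j‖ ≤
      μ / 2 * gradSq n w x + β / 2 * (‖v x‖ ^ (r - 1) * ‖w x‖ ^ 2) + η * ‖w x‖ ^ 2 :=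
    fun x => abs_convection_le hr hμ hβ hη (w x) (v x) _
  have hI₁ := hgw.const_mul (μ / 2)
  have hI₂ := hvw.const_mul (β / 2)
  have hI₃ := hw2.const_mul η
  have hI := (hI₁.fun_add hI₂).fun_add hI₃
  refine ⟨hI.mono' (aestronglyMeasurable_convection hw.continuous.measurable hv)
    (ae_of_all _ hbound), ?_⟩
  refine (norm_integral_le_of_norm_le hI (ae_of_all _ hbound)).trans_eq ?_
  rw [integral_add (hI₁.fun_add hI₂) hI₃, integral_add hI₁ hI₂, integral_const_mul,
    integral_const_mul, integral_const_mul]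

/-- Key convection estimate (2.30): for `r > 3`, `μ, β > 0`,
`η = ((r−3)/(2μ(r−1))) (2/(βμ(r−1)))^{2/(r−3)}`, `w` continuously differentiable with
`∫ |w|² < ∞` and `∫ |∇w|² < ∞`, and `v` measurable with `∫ |v|^{r−1}|w|² < ∞`, the integrand
`Σ_{i,j} w_i (∂w_j/∂x_i) v_j` is integrable and
`|b(w,w,v)| ≤ (μ/2) ∫ |∇w|² + (β/2) ∫ |v|^{r−1}|w|² + η ∫ |w|²`. -/
theorem key_convection_estimate (n : ℕ) (hn : 2 ≤ n) (r μ β η : ℝ)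
    (hr : 3 < r) (hμ : 0 < μ) (hβ : 0 < β)
    (hη : η = (r - 3) / (2 * μ * (r - 1)) * (2 / (β * μ * (r - 1))) ^ ((2 : ℝ) / (r - 3)))
    (w v : EuclideanSpace ℝ (Fin n) → EuclideanSpace ℝ (Fin n))
    (hw : ContDiff ℝ 1 w)
    (hw2 : Integrable (fun x => ‖w x‖ ^ 2))
    (hgw : Integrable (fun x => gradSq n w x))
    (hv : AEStronglyMeasurable v volume)
    (hvw : Integrable (fun x => ‖v x‖ ^ (r - 1) * ‖w x‖ ^ 2)) :
    Integrable (fun x => ∑ i, ∑ j, w x i * fderiv ℝ w x (EuclideanSpace.single i 1) j * v x j)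
    ∧ |∫ x, ∑ i, ∑ j, w x i * fderiv ℝ w x (EuclideanSpace.single i 1) j * v x j| ≤
        μ / 2 * (∫ x, gradSq n w x)
          + β / 2 * (∫ x, ‖v x‖ ^ (r - 1) * ‖w x‖ ^ 2)
          + η * (∫ x, ‖w x‖ ^ 2) :=
  key_convection_estimate_general n r μ β η hr hμ hβ hη w v hw hw2 hgw hv hvw
end
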